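/- arXiv:1511.01640 — 3 statements merged into one kernel-verified Lean document; each statement's English description precedes it below -/
import Mathlib

section
/- Let M be a model of C ⇒ D under hedge ⋆ (i.e., S(C,M)⋆ ≤ S(D,M)). Then for any L-set A: S(A,M)⋆ ≤ S(S(C,A)⋆ ⊗ D, M). -/
/-- A (complete) residuated lattice: a complete lattice with a commutative
monoid operation `mul` with unit `⊤` and residuum `resid` satisfying adjointness. -/
class ResLat (L : Type*) extends CompleteLattice L where
  mul : L → L → L
  resid : L → L → L
  mul_comm : ∀ a b : L, mul a b = mul b a
  mul_assoc : ∀ a b c : L, mul (mul a b) c = mul a (mul b c)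
  mul_top : ∀ a : L, mul a ⊤ = a
  adjoint : ∀ a b c : L, mul a b ≤ c ↔ a ≤ resid b c

open ResLat

/-- Subsethood degree `S(A,B) = ⨅ y, A y → B y`. -/
def Sdeg {L Y : Type*} [ResLat L] (A B : Y → L) : L := ⨅ y, resid (A y) (B y)

/-- Idempotent truth-stressing hedge. -/
def IsHedge {L : Type*} [ResLat L] (star : L → L) : Prop :=
  star ⊤ = ⊤ ∧ (∀ a : L, star a ≤ a) ∧
  (∀ a b : L, star (resid a b) ≤ resid (star a) (star b)) ∧
  (∀ a : L, star (star a) = star a)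

/-- Models of a theory (a set of graded attribute implications). -/
def Models {L Y : Type*} [ResLat L] (star : L → L)
    (T : Set ((Y → L) × (Y → L))) : Set (Y → L) :=
  {M | ∀ p ∈ T, star (Sdeg p.1 M) ≤ Sdeg p.2 M}


section Aux
variable {L : Type*} [ResLat L]

lemma RL.mul_le_mul_right {a b : L} (c : L) (h : a ≤ b) : mul c a ≤ mul c b := by
  rw [ResLat.mul_comm c a, adjoint]
  exact le_trans h ((adjoint b c (mul c b)).mp (le_of_eq (ResLat.mul_comm b c)))

lemma RL.mul_le_mul_left {a b : L} (c : L) (h : a ≤ b) : mul a c ≤ mul b c := by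
  rw [ResLat.mul_comm a c, ResLat.mul_comm b c]; exact RL.mul_le_mul_right c h

lemma RL.resid_mul_le {a b : L} : mul (resid a b) a ≤ b := (adjoint _ _ _).mpr le_rfl

lemma RL.top_le_resid {a b : L} (h : a ≤ b) : (⊤ : L) ≤ resid a b := by
  rw [← adjoint, ResLat.mul_comm, ResLat.mul_top]; exact h

lemma RL.star_mono {star : L → L} (hs : IsHedge star) {a b : L} (h : a ≤ b) :
    star a ≤ star b := by
  obtain ⟨h1, h2, h3, h4⟩ := hs
  have hr : resid a b = ⊤ := le_antisymm le_top (RL.top_le_resid h)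
  have : (⊤ : L) ≤ resid (star a) (star b) := by
    calc (⊤ : L) = star (resid a b) := by rw [hr, h1]
    _ ≤ _ := h3 a b
  have := (adjoint ⊤ (star a) (star b)).mpr this
  rwa [ResLat.mul_comm, ResLat.mul_top] at this

lemma RL.star_mul {star : L → L} (hs : IsHedge star) (a b : L) :
    mul (star a) (star b) ≤ star (mul a b) := by
  have h1 : a ≤ resid b (mul a b) := (adjoint _ _ _).mp le_rfl
  have h2 : star a ≤ resid (star b) (star (mul a b)) :=
    le_trans (RL.star_mono hs h1) (hs.2.2.1 b (mul a b))
  exact (adjoint _ _ _).mpr h2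

lemma RL.Sdeg_trans {Y : Type*} (A B C : Y → L) :
    mul (Sdeg A B) (Sdeg B C) ≤ Sdeg A C := by
  refine le_iInf fun y => (adjoint _ _ _).mp ?_
  rw [ResLat.mul_comm (Sdeg A B) (Sdeg B C), ResLat.mul_assoc]
  calc mul (Sdeg B C) (mul (Sdeg A B) (A y))
      ≤ mul (Sdeg B C) (B y) := RL.mul_le_mul_right _
        (le_trans (RL.mul_le_mul_left _ (iInf_le _ y)) RL.resid_mul_le)
    _ ≤ mul (resid (B y) (C y)) (B y) := RL.mul_le_mul_left _ (iInf_le _ y)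
    _ ≤ C y := RL.resid_mul_le

end Aux

theorem model_transfer {L Y : Type*} [ResLat L] [Fintype Y]
    (star : L → L) (hs : IsHedge star) (C D M A : Y → L)
    (hM : star (Sdeg C M) ≤ Sdeg D M) :
    star (Sdeg A M) ≤ Sdeg (fun y => mul (star (Sdeg C A)) (D y)) M := by
  refine le_iInf fun y => (adjoint _ _ _).mp ?_
  rw [← ResLat.mul_assoc]
  have key : mul (star (Sdeg A M)) (star (Sdeg C A)) ≤ Sdeg D M := by
    calc mul (star (Sdeg A M)) (star (Sdeg C A))
        ≤ star (mul (Sdeg A M) (Sdeg C A)) := RL.star_mul hs _ _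
      _ ≤ star (Sdeg C M) := RL.star_mono hs (by
          rw [ResLat.mul_comm]; exact RL.Sdeg_trans C A M)
      _ ≤ Sdeg D M := hM
  calc mul (mul (star (Sdeg A M)) (star (Sdeg C A))) (D y)
      ≤ mul (Sdeg D M) (D y) := RL.mul_le_mul_left _ key
    _ ≤ mul (resid (D y) (M y)) (D y) := RL.mul_le_mul_left _ (iInf_le _ y)
    _ ≤ M y := RL.resid_mul_le
end

section
/- Let cl : L^Y → L^Y be an L*-closure operator, i.e., A ⊆ cl(A), S(A,B)⋆ ≤ S(cl(A), cl(B)), and cl(cl(A)) = cl(A). Then for any L-sets A, C: cl(A ∪ (S(C,A)⋆ ⊗ cl(C))) = cl(A). -/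
open ResLat

lemma Sdeg_top {L Y : Type*} [ResLat L] {A B : Y → L} (h : ∀ y, A y ≤ B y) :
    Sdeg A B = (⊤ : L) := by
  refine le_antisymm le_top (le_iInf fun y => ?_)
  rw [← adjoint, ResLat.mul_comm, mul_top]; exact h y

lemma le_of_Sdeg_top {L Y : Type*} [ResLat L] {A B : Y → L}
    (h : (⊤ : L) ≤ Sdeg A B) (y : Y) : A y ≤ B y := by
  have := h.trans (iInf_le _ y)
  rw [← adjoint, ResLat.mul_comm, mul_top] at this
  exact this

lemma cl_mono {L Y : Type*} [ResLat L] (star : L → L) (hs : IsHedge star)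
    (cl : (Y → L) → (Y → L))
    (hgrad : ∀ A B : Y → L, star (Sdeg A B) ≤ Sdeg (cl A) (cl B))
    {A B : Y → L} (h : ∀ y, A y ≤ B y) : ∀ y, cl A y ≤ cl B y := by
  have := hgrad A B
  rw [Sdeg_top h, hs.1] at this
  exact le_of_Sdeg_top this

theorem closure_of_enlarged_antecedent {L Y : Type*} [ResLat L] [Fintype Y]
    (star : L → L) (hs : IsHedge star)
    (cl : (Y → L) → (Y → L))
    (hext : ∀ A : Y → L, ∀ y, A y ≤ cl A y)
    (hgrad : ∀ A B : Y → L, star (Sdeg A B) ≤ Sdeg (cl A) (cl B))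
    (hidem : ∀ A : Y → L, cl (cl A) = cl A)
    (A C : Y → L) :
    cl (fun y => A y ⊔ mul (star (Sdeg C A)) (cl C y)) = cl A := by
  set D : Y → L := fun y => A y ⊔ mul (star (Sdeg C A)) (cl C y) with hD
  have hAD : ∀ y, A y ≤ D y := fun y => le_sup_left
  have hDclA : ∀ y, D y ≤ cl A y := by
    intro y
    apply sup_le (hext A y)
    rw [adjoint]
    exact (hgrad C A).trans (iInf_le _ y)
  funext y
  apply le_antisymm
  · calc cl D y ≤ cl (cl A) y := cl_mono star hs cl hgrad hDclA y
      _ = cl A y := by rw [hidem]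
  · exact cl_mono star hs cl hgrad hAD y
end

section
/- If L and Y are finite, then the reduction relation on theories (Δ reduces to Γ if Γ replaces a formula A ⇒ B of Δ by A ∪ (S(C,A)⋆ ⊗ D) ⇒ B with Γ ≠ Δ, for some other C ⇒ D ∈ Δ) is well-founded: there is no infinite sequence of reductions, so every theory reduces in finitely many steps to an irreducible theory. -/
open ResLat

/-- One reduction step on theories. -/
def Reduces {L Y : Type*} [ResLat L] (star : L → L)
    (Δ Γ : Set ((Y → L) × (Y → L))) : Prop :=
  Γ ≠ Δ ∧ ∃ A B C D : Y → L, (A, B) ∈ Δ ∧ (C, D) ∈ Δ ∧ (A, B) ≠ (C, D) ∧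
    Γ = (Δ \ {(A, B)}) ∪
      {((fun y => A y ⊔ mul (star (Sdeg C A)) (D y)), B)}

section Aux
variable {L Y : Type*} [ResLat L] [Finite L] [Finite Y]

/-- weight of an antecedent: number of strictly larger maps -/
noncomputable def hw (A : Y → L) : ℕ := {C : Y → L | A < C}.ncard

lemma hw_lt {A A' : Y → L} (h : A < A') : hw A' < hw A := by
  unfold hw
  apply Set.ncard_lt_ncard _ (Set.toFinite _)
  constructor
  · intro C hC; exact lt_trans h hC
  · intro hsub
    exact absurd (hsub h) (lt_irrefl A')

lemma hw_pos {A A' : Y → L} (h : A < A') : 0 < hw A := by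
  unfold hw
  rw [Set.ncard_pos (Set.toFinite _)]
  exact ⟨A', h⟩

noncomputable def Msr (Δ : Set ((Y → L) × (Y → L))) : ℕ :=
  ∑ p ∈ (Set.toFinite Δ).toFinset, hw p.1

lemma Msr_lt (star : L → L) {Δ Γ : Set ((Y → L) × (Y → L))}
    (h : Reduces star Δ Γ) : Msr Γ < Msr Δ := by
  classical
  obtain ⟨hne, A, B, C, D, hAB, hCD, hpq, hΓ⟩ := h
  set A' : Y → L := fun y => A y ⊔ mul (star (Sdeg C A)) (D y) with hA'
  have hle : A ≤ A' := fun y => le_sup_left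
  have hAA' : A ≠ A' := by
    intro hEq
    apply hne
    rw [hΓ, ← hEq]
    rw [Set.diff_union_self]
    exact Set.union_eq_self_of_subset_right (Set.singleton_subset_iff.mpr hAB)
  have hlt : A < A' := lt_of_le_of_ne hle hAA'
  by_cases hq : (A', B) ∈ Δ \ {(A, B)}
  · -- Γ = Δ \ {(A,B)}
    have hΓ' : Γ = Δ \ {(A, B)} := by
      rw [hΓ]
      exact Set.union_eq_self_of_subset_right (Set.singleton_subset_iff.mpr hq)
    unfold Msr
    apply Finset.sum_lt_sum_of_subset (i := (A, B))
    · intro x hx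
      simp only [Set.Finite.mem_toFinset] at hx ⊢
      rw [hΓ'] at hx; exact hx.1
    · simp only [Set.Finite.mem_toFinset]; exact hAB
    · simp only [Set.Finite.mem_toFinset, hΓ']
      intro hx; exact hx.2 rfl
    · exact hw_pos hlt
    · intro j _ _; exact Nat.zero_le _
  · -- Γ has (A,B) replaced by (A',B)
    have hAB' : ((A, B) : (Y → L) × (Y → L)) ≠ (A', B) := by
      intro hEq; exact hAA' (congrArg Prod.fst hEq)
    have hfinΓ : (Set.toFinite Γ).toFinset
        = insert (A', B) (((Set.toFinite Δ).toFinset).erase (A, B)) := by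
      ext x
      simp only [Set.Finite.mem_toFinset, Finset.mem_insert, Finset.mem_erase,
        Set.Finite.mem_toFinset, hΓ, Set.mem_union, Set.mem_diff,
        Set.mem_singleton_iff]
      tauto
    unfold Msr
    rw [hfinΓ, Finset.sum_insert (by
      simp only [Finset.mem_erase, Set.Finite.mem_toFinset]
      intro hx
      exact hq ⟨hx.2, fun hs => hAB' hs.symm⟩)]
    have hsplit : ∑ p ∈ (Set.toFinite Δ).toFinset, hw p.1
        = hw A + ∑ p ∈ ((Set.toFinite Δ).toFinset).erase (A, B), hw p.1 := by
      rw [← Finset.add_sum_erase _ _ (by simp only [Set.Finite.mem_toFinset]; exact hAB)]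
    rw [hsplit]
    exact Nat.add_lt_add_right (hw_lt hlt) _

end Aux

theorem reduction_terminates {L Y : Type*} [ResLat L] [Finite L] [Finite Y]
    (star : L → L) :
    ¬ ∃ f : ℕ → Set ((Y → L) × (Y → L)),
        ∀ n, Reduces star (f n) (f (n + 1)) := by
  rintro ⟨f, hf⟩
  have key : ∀ n, Msr (f n) + n ≤ Msr (f 0) := by
    intro n
    induction n with
    | zero => simp
    | succ n ih =>
      have := Msr_lt star (hf n)
      omega
  have := key (Msr (f 0) + 1)
  omega
end
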